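/- If G is a connected simple graph with maximum degree Δ = 3, then the zero forcing number of G satisfies Z(G) ≤ β(G) + 1. -/

import Mathlib

open SimpleGraph

namespace ZFPaper

variable {V : Type*} {W : Type*}

/-- The degree of a vertex, as the cardinality of its neighbor set. -/
noncomputable def degSet (G : SimpleGraph V) (v : V) : ℕ := (G.neighborSet v).ncard

/-- The maximum degree of a graph. -/
noncomputable def maxDeg (G : SimpleGraph V) : ℕ := sSup {d : ℕ | ∃ v, degSet G v = d}

/-- The minimum degree of a graph. -/
noncomputable def minDeg (G : SimpleGraph V) : ℕ := sInf {d : ℕ | ∃ v, degSet G v = d}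

/-- A set of vertices is a vertex cover if every edge has an endpoint in it. -/
def IsVC (G : SimpleGraph V) (C : Set V) : Prop :=
  ∀ ⦃u w : V⦄, G.Adj u w → u ∈ C ∨ w ∈ C

/-- The vertex cover number β(G). -/
noncomputable def vcNum (G : SimpleGraph V) : ℕ :=
  sInf {m : ℕ | ∃ C : Set V, IsVC G C ∧ C.ncard = m}

/-- A set of vertices is independent if its vertices are pairwise non-adjacent. -/
def IsIndep (G : SimpleGraph V) (S : Set V) : Prop :=
  ∀ ⦃u : V⦄, u ∈ S → ∀ ⦃w : V⦄, w ∈ S → ¬ G.Adj u w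

/-- The independence number α(G). -/
noncomputable def indepNum (G : SimpleGraph V) : ℕ :=
  sSup {m : ℕ | ∃ S : Set V, IsIndep G S ∧ S.ncard = m}

/-- `Forced G B v` means that, starting from the blue set `B`, the vertex `v` is
eventually colored blue by the zero forcing process: a blue vertex with a unique
white neighbor forces that neighbor to become blue. -/
inductive Forced (G : SimpleGraph V) (B : Set V) : V → Prop
  | init : ∀ v ∈ B, Forced G B v
  | force : ∀ u w : V, Forced G B u → G.Adj u w →
      (∀ x : V, G.Adj u x → x ≠ w → Forced G B x) → Forced G B w

/-- A zero forcing set: iterating the forcing process colors every vertex blue. -/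
def IsZFS (G : SimpleGraph V) (B : Set V) : Prop := ∀ v : V, Forced G B v

/-- The zero forcing number Z(G). -/
noncomputable def zfNum (G : SimpleGraph V) : ℕ :=
  sInf {m : ℕ | ∃ B : Set V, IsZFS G B ∧ B.ncard = m}

/-- A graph is claw-free if it has no induced `K_{1,3}`. -/
def ClawFree (G : SimpleGraph V) : Prop :=
  ¬ ∃ (v a b c : V), G.Adj v a ∧ G.Adj v b ∧ G.Adj v c ∧
      a ≠ b ∧ a ≠ c ∧ b ≠ c ∧ ¬ G.Adj a b ∧ ¬ G.Adj a c ∧ ¬ G.Adj b c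

/-- The join `G ∨ H` of two graphs: disjoint union plus all edges between the parts. -/
def joinG (G : SimpleGraph V) (H : SimpleGraph W) : SimpleGraph (V ⊕ W) where
  Adj a b :=
    (∃ u v, a = Sum.inl u ∧ b = Sum.inl v ∧ G.Adj u v) ∨
    (∃ u v, a = Sum.inr u ∧ b = Sum.inr v ∧ H.Adj u v) ∨
    (∃ u v, a = Sum.inl u ∧ b = Sum.inr v) ∨
    (∃ u v, a = Sum.inr u ∧ b = Sum.inl v)
  symm := by
    constructor
    rintro a b (⟨u, v, rfl, rfl, h⟩ | ⟨u, v, rfl, rfl, h⟩ | ⟨u, v, rfl, rfl⟩ | ⟨u, v, rfl, rfl⟩)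
    · exact Or.inl ⟨v, u, rfl, rfl, h.symm⟩
    · exact Or.inr (Or.inl ⟨v, u, rfl, rfl, h.symm⟩)
    · exact Or.inr (Or.inr (Or.inr ⟨v, u, rfl, rfl⟩))
    · exact Or.inr (Or.inr (Or.inl ⟨v, u, rfl, rfl⟩))
  loopless := by
    constructor
    rintro a (⟨u, v, rfl, h, hadj⟩ | ⟨u, v, rfl, h, hadj⟩ | ⟨u, v, rfl, h⟩ | ⟨u, v, rfl, h⟩) <;>
      simp_all

/-- The graph obtained from `G` by a `k`-leaf support vertex addition at `v`:
a new support vertex `w = Sum.inr none` is attached to `v`, and `k` new leaves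
`Sum.inr (some i)` are attached to `w`. -/
def lsva (G : SimpleGraph V) (v : V) (k : ℕ) : SimpleGraph (V ⊕ Option (Fin k)) where
  Adj a b :=
    (∃ x y, a = Sum.inl x ∧ b = Sum.inl y ∧ G.Adj x y) ∨
    (a = Sum.inl v ∧ b = Sum.inr none) ∨
    (a = Sum.inr none ∧ b = Sum.inl v) ∨
    (∃ i : Fin k, a = Sum.inr none ∧ b = Sum.inr (some i)) ∨
    (∃ i : Fin k, a = Sum.inr (some i) ∧ b = Sum.inr none)
  symm := by
    constructor
    rintro a b (⟨x, y, rfl, rfl, h⟩ | ⟨rfl, rfl⟩ | ⟨rfl, rfl⟩ | ⟨i, rfl, rfl⟩ | ⟨i, rfl, rfl⟩)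
    · exact Or.inl ⟨y, x, rfl, rfl, h.symm⟩
    · exact Or.inr (Or.inr (Or.inl ⟨rfl, rfl⟩))
    · exact Or.inr (Or.inl ⟨rfl, rfl⟩)
    · exact Or.inr (Or.inr (Or.inr (Or.inr ⟨i, rfl, rfl⟩)))
    · exact Or.inr (Or.inr (Or.inr (Or.inl ⟨i, rfl, rfl⟩)))
  loopless := by
    constructor
    rintro a (⟨x, y, rfl, h, hadj⟩ | ⟨rfl, h⟩ | ⟨rfl, h⟩ | ⟨i, rfl, h⟩ | ⟨i, rfl, h⟩) <;> simp_all

/-- `LSVAChain m G H` means `H` is obtained from `G` by a finite sequence of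
`m`-leaf support vertex additions (each applied at a vertex of degree at most `m-1`). -/
inductive LSVAChain (m : ℕ) : {α : Type} → SimpleGraph α → {β : Type} → SimpleGraph β → Prop
  | refl {α : Type} (G : SimpleGraph α) : LSVAChain m G G
  | step {α : Type} {G : SimpleGraph α} {β : Type} {H : SimpleGraph β} (v : β)
      (hv : (H.neighborSet v).ncard ≤ m - 1) :
      LSVAChain m G H → LSVAChain m G (lsva H v m)

/-- The graph obtained from the complete graph `K_n` by attaching one pendant
vertex to each vertex in the set `A`. -/
def pendantKn (n : ℕ) (A : Finset (Fin n)) : SimpleGraph (Fin n ⊕ {a : Fin n // a ∈ A}) where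
  Adj a b :=
    (∃ x y : Fin n, a = Sum.inl x ∧ b = Sum.inl y ∧ x ≠ y) ∨
    (∃ p : {a : Fin n // a ∈ A}, a = Sum.inl p.1 ∧ b = Sum.inr p) ∨
    (∃ p : {a : Fin n // a ∈ A}, a = Sum.inr p ∧ b = Sum.inl p.1)
  symm := by
    constructor
    rintro a b (⟨x, y, rfl, rfl, h⟩ | ⟨p, rfl, rfl⟩ | ⟨p, rfl, rfl⟩)
    · exact Or.inl ⟨y, x, rfl, rfl, h.symm⟩
    · exact Or.inr (Or.inr ⟨p, rfl, rfl⟩)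
    · exact Or.inr (Or.inl ⟨p, rfl, rfl⟩)
  loopless := by
    constructor
    rintro a (⟨x, y, rfl, h, hne⟩ | ⟨p, rfl, h⟩ | ⟨p, rfl, h⟩) <;> simp_all

/-- The graph obtained from a cycle `C_k` with vertices `v_1, …, v_k` (the `Sum.inl`
vertices) together with disjoint complete graphs `K_{n i}` (the `Sum.inr` vertices),
where every vertex of the `i`-th complete graph is joined to both `v_i` and `v_{i+1}`
(indices mod `k`). -/
def cycleCliques (k : ℕ) (n : Fin k → ℕ) :
    SimpleGraph (Fin k ⊕ Σ i : Fin k, Fin (n i)) where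
  Adj a b :=
    match a, b with
    | Sum.inl i, Sum.inl j =>
        i ≠ j ∧ ((j : ℕ) = ((i : ℕ) + 1) % k ∨ (i : ℕ) = ((j : ℕ) + 1) % k)
    | Sum.inl j, Sum.inr s => (j : ℕ) = (s.1 : ℕ) ∨ (j : ℕ) = ((s.1 : ℕ) + 1) % k
    | Sum.inr s, Sum.inl j => (j : ℕ) = (s.1 : ℕ) ∨ (j : ℕ) = ((s.1 : ℕ) + 1) % k
    | Sum.inr s, Sum.inr t => s ≠ t ∧ s.1 = t.1
  symm := by
    constructor
    rintro (i | s) (j | t) h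
    · exact ⟨Ne.symm h.1, h.2.symm⟩
    · exact h
    · exact h
    · exact ⟨Ne.symm h.1, h.2.symm⟩
  loopless := by
    constructor
    rintro (i | s) h
    · exact h.1 rfl
    · exact h.1 rfl

/-!
Induction on the size of a vertex cover `C` of a connected graph of maximum degree at most `3`.
Pick `c ∈ C` farthest from a fixed vertex and let `P` be the leaves at `c` outside `C`.
Deleting `c` and `P` leaves a connected graph covered by `C \ {c}`, and a zero forcing set of it
extends to `G` by one vertex (`c` itself, or a leaf of `P`, which forces `c`) as long as
`|P| ≤ 2`: then `c` can force its last white leaf. If `|P| = 3` the graph is the star `K_{1,3}`,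
whose zero forcing number is `2`.
-/

section ZeroForcing

variable {G : SimpleGraph V}

lemma degSet_le_maxDeg [Finite V] (G : SimpleGraph V) (v : V) : degSet G v ≤ maxDeg G :=
  le_csSup ⟨Nat.card V, by rintro _ ⟨w, rfl⟩; exact Set.ncard_le_card _⟩
    (⟨v, rfl⟩ : ∃ w, degSet G w = degSet G v)

lemma exists_isVC_ncard_eq_vcNum (G : SimpleGraph V) :
    ∃ C : Set V, IsVC G C ∧ C.ncard = vcNum G :=
  Nat.sInf_mem (s := {m | ∃ C : Set V, IsVC G C ∧ C.ncard = m})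
    ⟨_, Set.univ, fun u _ _ => Or.inl (Set.mem_univ u), rfl⟩

lemma zfNum_le_ncard {B : Set V} (hB : IsZFS G B) : zfNum G ≤ B.ncard :=
  Nat.sInf_le ⟨B, hB, rfl⟩

lemma IsVC.preimage_val {C : Set V} (hC : IsVC G C) (S : Set V) :
    IsVC (G.induce S) (Subtype.val ⁻¹' C) :=
  fun _ _ h => hC h

lemma ncard_preimage_val (S T : Set V) : (Subtype.val ⁻¹' T : Set S).ncard = (S ∩ T).ncard := by
  rw [← Set.ncard_image_of_injective _ Subtype.val_injective, Subtype.image_preimage_coe]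

lemma ncard_neighborSet_induce_le [Finite V] (S : Set V) (v : S) :
    ((G.induce S).neighborSet v).ncard ≤ (G.neighborSet v).ncard := by
  change (Subtype.val ⁻¹' G.neighborSet v : Set S).ncard ≤ _
  rw [ncard_preimage_val]
  exact Set.ncard_le_ncard Set.inter_subset_right

lemma subsingleton_of_preconnected_of_isVC_empty (hG : G.Preconnected) (hC : IsVC G ∅) :
    Subsingleton V := by
  have hbot : G = ⊥ := by
    ext u w
    simpa using hC (u := u) (w := w)
  exact preconnected_bot_iff_subsingleton.mp (hbot ▸ hG)

lemma _root_.SimpleGraph.Preconnected.exists_adj_dist_lt (hG : G.Preconnected) {r u : V}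
    (hu : u ≠ r) :
    ∃ x, G.Adj u x ∧ G.dist r x < G.dist r u := by
  obtain ⟨p, hp⟩ := (hG u r).exists_walk_length_eq_dist
  cases p with
  | nil => exact absurd rfl hu
  | @cons _ x _ hux q =>
    refine ⟨x, hux, ?_⟩
    have := dist_le q
    rw [dist_comm, Walk.length_cons] at hp
    rw [dist_comm]
    omega

lemma preconnected_induce_of_exists_adj_dist_lt {S : Set V} {r : V}
    (h : ∀ u ∈ S, u ≠ r → ∃ z ∈ S, G.Adj u z ∧ G.dist r z < G.dist r u) :
    (G.induce S).Preconnected := by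
  have reach : ∀ n, ∀ u (hu : u ∈ S), G.dist r u = n →
      ∃ hr : r ∈ S, (G.induce S).Reachable ⟨u, hu⟩ ⟨r, hr⟩ := by
    intro n
    induction n using Nat.strong_induction_on with
    | _ n ih =>
      intro u hu hn
      by_cases hur : u = r
      · subst hur
        exact ⟨hu, Reachable.refl _⟩
      obtain ⟨z, hz, huz, hdist⟩ := h u hu hur
      obtain ⟨hr, hzr⟩ := ih _ (hn ▸ hdist) z hz rfl
      have huz' : (G.induce S).Adj ⟨u, hu⟩ ⟨z, hz⟩ := huz
      exact ⟨hr, huz'.reachable.trans hzr⟩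
  rintro ⟨u, hu⟩ ⟨v, hv⟩
  obtain ⟨hr, hur⟩ := reach _ u hu rfl
  obtain ⟨_, hvr⟩ := reach _ v hv rfl
  exact hur.trans hvr.symm

lemma Forced.of_induce {S B : Set V} {B' : Set S} (hB' : ∀ v ∈ B', Forced G B v)
    (hout : ∀ (u : S) (x : V), G.Adj u x → x ∉ S → Forced G B x) {v : S}
    (hv : Forced (G.induce S) B' v) : Forced G B v := by
  induction hv with
  | init u hu => exact hB' u hu
  | force u w _ huw _ ihu ihx =>
    refine Forced.force (u : V) (w : V) ihu huw fun x hux hxw => ?_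
    by_cases hxS : x ∈ S
    · exact ihx ⟨x, hxS⟩ hux fun h => hxw (congrArg Subtype.val h)
    · exact hout u x hux hxS

/-- Some vertex of `A` makes `c` blue, directly or as a leaf forcing it; then the forcing of the
smaller graph runs in `G`, whose only edges leaving it go to `c`, and finally `c` forces its last
white leaf. -/
lemma isZFS_image_union {c : V} {P A : Set V} (hPc : ∀ p ∈ P, G.Adj p c)
    (hPonly : ∀ p ∈ P, ∀ x, G.Adj p x → x = c) (hA : (A ∩ insert c P).Nonempty)
    (hPA : (P \ A).Subsingleton) {B' : Set ↥(insert c P)ᶜ}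
    (hB' : IsZFS (G.induce (insert c P)ᶜ) B') : IsZFS G (Subtype.val '' B' ∪ A) := by
  set B := Subtype.val '' B' ∪ A
  have hc : Forced G B c := by
    obtain ⟨a, haA, rfl | haP⟩ := hA
    · exact Forced.init a (Or.inr haA)
    · exact Forced.force a c (Forced.init a (Or.inr haA)) (hPc a haP)
        fun x hax hxc => absurd (hPonly a haP x hax) hxc
  have hrest : ∀ v : ↥(insert c P)ᶜ, Forced G B v := by
    have hB'B : ∀ v ∈ B', Forced G B v := fun v hv => Forced.init _ (Or.inl ⟨v, hv, rfl⟩)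
    refine fun v => Forced.of_induce hB'B ?_ (hB' v)
    intro u x hux hx
    rcases not_not.mp hx with rfl | hxP
    · exact hc
    · exact absurd (Or.inl (hPonly x hxP u hux.symm)) u.2
  have hleaf : ∀ p ∈ P, Forced G B p := by
    intro p hp
    by_cases hpA : p ∈ A
    · exact Forced.init p (Or.inr hpA)
    refine Forced.force c p hc (hPc p hp).symm fun x hcx hxp => ?_
    by_cases hx : x ∈ insert c P
    · rcases hx with rfl | hxP
      · exact absurd hcx (G.loopless.irrefl x)
      · by_cases hxA : x ∈ A
        · exact Forced.init x (Or.inr hxA)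
        · exact absurd (hPA ⟨hxP, hxA⟩ ⟨hp, hpA⟩) hxp
    · exact hrest ⟨x, hx⟩
  intro v
  by_cases hv : v ∈ insert c P
  · rcases hv with rfl | hvP
    · exact hc
    · exact hleaf v hvP
  · exact hrest ⟨v, hv⟩

def leavesOutside (G : SimpleGraph V) (C : Set V) (c : V) : Set V :=
  {w | w ∉ C ∧ ∀ x, G.Adj w x → x = c}

lemma adj_of_mem_leavesOutside (hG : G.Preconnected) {C : Set V} {c p : V} (hcC : c ∈ C)
    (hp : p ∈ leavesOutside G C c) : G.Adj p c := by
  obtain ⟨q⟩ := hG p c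
  cases q with
  | nil => exact absurd hcC hp.1
  | cons hpx _ => exact hp.2 _ hpx ▸ hpx

lemma compl_insert_leavesOutside_inter (C : Set V) (c : V) :
    (insert c (leavesOutside G C c))ᶜ ∩ C = C \ {c} := by
  ext x
  constructor
  · rintro ⟨hx, hxC⟩
    exact ⟨hxC, fun hxc => hx (Or.inl hxc)⟩
  · rintro ⟨hxC, hxc⟩
    exact ⟨fun hx => hx.elim hxc fun hxP => hxP.1 hxC, hxC⟩

/-- Every surviving `u ≠ r` has a surviving neighbour closer to `r`: the next vertex of a shortest
path to `r`, unless that is `c`; then `u ∉ C` by the choice of `c`, and `u`, not being a leaf at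
`c`, has a second neighbour, which lies in `C` and so is no farther from `r` than `c`. -/
lemma preconnected_induce_compl_leavesOutside (hG : G.Preconnected) {C : Set V} (hC : IsVC G C)
    {r c : V} (hc : ∀ y ∈ C, G.dist r y ≤ G.dist r c) :
    (G.induce (insert c (leavesOutside G C c))ᶜ).Preconnected := by
  refine preconnected_induce_of_exists_adj_dist_lt (r := r) fun u hu hur => ?_
  obtain ⟨x, hux, hx⟩ := hG.exists_adj_dist_lt hur
  by_cases hxS : x ∈ (insert c (leavesOutside G C c))ᶜ
  · exact ⟨x, hxS, hux, hx⟩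
  rcases not_not.mp hxS with rfl | hxP
  · have huC : u ∉ C := fun huC => absurd (hc u huC) (by omega)
    obtain ⟨z, huz, hzx⟩ : ∃ z, G.Adj u z ∧ z ≠ x := by
      by_contra! h
      exact hu (Or.inr ⟨huC, h⟩)
    have hzC : z ∈ C := (hC huz).resolve_left huC
    exact ⟨z, fun hz => hz.elim hzx fun hzP => hzP.1 hzC, huz, (hc z hzC).trans_lt hx⟩
  · exact absurd (Or.inl (hxP.2 u hux.symm)) hu

lemma insert_eq_univ_of_neighborSet_subset (hG : G.Preconnected) {c : V} {P : Set V}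
    (hPonly : ∀ p ∈ P, ∀ x, G.Adj p x → x = c) (hcP : G.neighborSet c ⊆ P) :
    insert c P = Set.univ := by
  refine Set.eq_univ_of_forall fun v => by_contra fun hv => ?_
  obtain ⟨d, -, hd, hd'⟩ := (hG c v).some.exists_boundary_dart _ (Set.mem_insert c P) hv
  rcases hd with hd | hd
  · exact hd' (Or.inr (hcP (hd ▸ d.adj)))
  · exact hd' (Or.inl (hPonly _ hd _ d.adj))

lemma isZFS_sdiff_singleton_of_neighborSet_eq (hG : G.Preconnected) {c p : V} {P : Set V}
    (hPonly : ∀ p ∈ P, ∀ x, G.Adj p x → x = c) (hNP : G.neighborSet c = P)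
    (hPp : (P \ {p}).Nonempty) : IsZFS G (P \ {p}) := by
  have hZ : IsZFS (G.induce (insert c P)ᶜ) ∅ := fun v =>
    absurd v.2 (by simp [insert_eq_univ_of_neighborSet_subset hG hPonly hNP.subset])
  obtain ⟨q, hq⟩ := hPp
  have hB := isZFS_image_union (fun p hp => (hNP.symm.subset hp : G.Adj c p).symm) hPonly
    ⟨q, hq, Or.inr hq.1⟩ (Set.subsingleton_singleton.anti fun x hx =>
      by_contra fun hxp => hx.2 ⟨hx.1, hxp⟩) hZ
  rwa [Set.image_empty, Set.empty_union] at hB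

lemma exists_mem_insert_subsingleton_sdiff [Finite V] (c : V) {P : Set V} (hP : P.ncard ≤ 2) :
    ∃ a ∈ insert c P, (P \ {a}).Subsingleton := by
  rcases P.eq_empty_or_nonempty with hP0 | ⟨p, hp⟩
  · exact ⟨c, Set.mem_insert c P, by simp [hP0]⟩
  · refine ⟨p, Or.inr hp, Set.ncard_le_one_iff_subsingleton.mp ?_⟩
    rw [Set.ncard_sdiff_singleton_of_mem hp]
    omega

theorem exists_isZFS_ncard_le_of_isVC [Finite V] (hG : G.Preconnected)
    (hdeg : ∀ v, (G.neighborSet v).ncard ≤ 3) {C : Set V} (hC : IsVC G C) :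
    ∃ B : Set V, IsZFS G B ∧ B.ncard ≤ C.ncard + 1 := by
  obtain ⟨n, hn⟩ : ∃ n, C.ncard = n := ⟨_, rfl⟩
  induction n generalizing V with
  | zero =>
    have : Subsingleton V :=
      subsingleton_of_preconnected_of_isVC_empty hG ((Set.ncard_eq_zero (s := C)).mp hn ▸ hC)
    exact ⟨Set.univ, fun v => Forced.init v trivial, (Set.ncard_le_one_of_subsingleton _).trans
      (by omega)⟩
  | succ n ih =>
    obtain ⟨r, hr⟩ := Set.nonempty_of_ncard_ne_zero (by omega : C.ncard ≠ 0)
    obtain ⟨c, hcC, hcmax⟩ := Set.exists_max_image C (G.dist r) C.toFinite ⟨r, hr⟩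
    set P := leavesOutside G C c
    have hPc : ∀ p ∈ P, G.Adj p c := fun p hp => adj_of_mem_leavesOutside hG hcC hp
    have hPonly : ∀ p ∈ P, ∀ x, G.Adj p x → x = c := fun p hp => hp.2
    have hPN : P ⊆ G.neighborSet c := fun p hp => (hPc p hp).symm
    rcases ((Set.ncard_le_ncard hPN).trans (hdeg c)).lt_or_eq with hP2 | hP3
    · have hC' : (Subtype.val ⁻¹' C : Set ↥(insert c P)ᶜ).ncard = n := by
        rw [ncard_preimage_val, compl_insert_leavesOutside_inter,
          Set.ncard_sdiff_singleton_of_mem hcC, hn]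
        rfl
      obtain ⟨B', hB', hB'n⟩ := ih (hG := preconnected_induce_compl_leavesOutside hG hC hcmax)
        (hdeg := fun v => (ncard_neighborSet_induce_le _ v).trans (hdeg v))
        (hC := hC.preimage_val _) (hn := hC')
      obtain ⟨a, ha, hPa⟩ := exists_mem_insert_subsingleton_sdiff c (by omega : P.ncard ≤ 2)
      refine ⟨_, isZFS_image_union (A := {a}) hPc hPonly ⟨a, rfl, ha⟩ hPa hB', ?_⟩
      calc (Subtype.val '' B' ∪ {a}).ncard
          ≤ (Subtype.val '' B').ncard + ({a} : Set V).ncard := Set.ncard_union_le _ _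
        _ = B'.ncard + 1 := by rw [Set.ncard_image_of_injective _ Subtype.val_injective,
            Set.ncard_singleton]
        _ ≤ C.ncard + 1 := by omega
    · have hNP : G.neighborSet c = P :=
        (Set.eq_of_subset_of_ncard_le hPN (hP3 ▸ hdeg c)).symm
      obtain ⟨p, hp⟩ := Set.nonempty_of_ncard_ne_zero (by omega : P.ncard ≠ 0)
      have hP2 : (P \ {p}).ncard = 2 := by rw [Set.ncard_sdiff_singleton_of_mem hp]; omega
      refine ⟨P \ {p}, isZFS_sdiff_singleton_of_neighborSet_eq hG hPonly hNP ?_, by omega⟩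
      exact Set.nonempty_of_ncard_ne_zero (by omega)

end ZeroForcing

/-- For a connected graph with maximum degree `Δ = 3`,
`Z(G) ≤ β(G) + 1`. -/
theorem stmt3 {V : Type*} [Fintype V] (G : SimpleGraph V)
    (hconn : G.Connected) (hdelta : maxDeg G = 3) :
    zfNum G ≤ vcNum G + 1 := by
  obtain ⟨C, hC, hCn⟩ := exists_isVC_ncard_eq_vcNum G
  obtain ⟨B, hB, hBn⟩ := exists_isZFS_ncard_le_of_isVC hconn.preconnected
    (fun v => hdelta ▸ degSet_le_maxDeg G v) hC
  exact (zfNum_le_ncard hB).trans (hCn ▸ hBn)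

end ZFPaper
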